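/- arXiv:1610.05722 — 2 statements merged into one kernel-verified Lean document; each statement's English description precedes it below -/
import Mathlib

section
/- For every integer m ≥ 0, the Hermite-type polynomial h_m(ξ) = Σ_{i=0}^{⌊m/2⌋} (m!/(i!(m-2i)!)) (-1)^i ξ^{m-2i} satisfies the orthogonality relation ∫_ℝ h_m(ξ) h_n(ξ) ρ(ξ) dξ = 2^m m! δ_{m,n}, where ρ(ξ) = (4π)^{-1/2} exp(-ξ²/4). -/
open MeasureTheory

/-- Rescaled Hermite polynomial `h_m`. -/
noncomputable def hermiteH (m : ℕ) (ξ : ℝ) : ℝ :=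
  ∑ i ∈ Finset.range (m / 2 + 1),
    ((Nat.factorial m : ℝ) / ((Nat.factorial i : ℝ) * (Nat.factorial (m - 2 * i) : ℝ)))
      * (-1 : ℝ) ^ i * ξ ^ (m - 2 * i)

/-- Gaussian weight `ρ(ξ) = (4π)^{-1/2} e^{-ξ²/4}`. -/
noncomputable def weightRho (ξ : ℝ) : ℝ :=
  (4 * Real.pi) ^ (-(1 : ℝ) / 2) * Real.exp (-ξ ^ 2 / 4)

/-! `h_m = exp(-∂²) ξ^m = ∑ᵢ (-1)^i / i! ∂^{2i} ξ^m`, and `∂ⁿ (ξ p) = ξ ∂ⁿ p + n ∂ⁿ⁻¹ p` turns this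
into `h_{m+1} = ξ h_m - 2 h_m'`. As `ρ' = -(ξ/2) ρ`, that says `h_{m+1} ρ = -2 (h_m ρ)'`, so `k`
integrations by parts give `∫ p h_k ρ = 2^k ∫ p⁽ᵏ⁾ ρ` for every polynomial `p`. For `m ≤ n` take
`p = h_m` and `k = n`: `h_m⁽ⁿ⁾` is `m!` if `n = m` and `0` otherwise, and `∫ ρ = 1`. -/

open Polynomial Finset
open scoped Nat

section Algebra

variable (K : Type*) [Field K]

noncomputable def hermitePoly (m : ℕ) : K[X] :=
  ∑ i ∈ range (m + 1), C ((-1) ^ i / i ! : K) * derivative^[2 * i] (X ^ m)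

@[simp]
lemma hermitePoly_zero : hermitePoly K 0 = 1 := by
  simp [hermitePoly]

lemma hermitePoly_succ [CharZero K] (m : ℕ) :
    hermitePoly K (m + 1) = X * hermitePoly K m - 2 * derivative (hermitePoly K m) := by
  have hcoeff (j : ℕ) :
      ((2 * (j + 1) : ℕ) : K) * ((-1) ^ (j + 1) / (j + 1)!) = -2 * ((-1) ^ j / j !) := by
    rw [Nat.factorial_succ]; push_cast; field_simp; ring
  have hX : ∑ i ∈ range (m + 2), C ((-1) ^ i / i ! : K) * (derivative^[2 * i] (X ^ m) * X)
      = X * hermitePoly K m := by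
    rw [sum_range_succ, iterate_derivative_eq_zero (by rw [natDegree_X_pow]; omega),
      hermitePoly, mul_sum]
    simp only [zero_mul, mul_zero, add_zero]
    exact sum_congr rfl fun i _ => by ring
  have hD : ∑ i ∈ range (m + 2),
      C ((-1) ^ i / i ! : K) * ((2 * i) • derivative^[2 * i - 1] (X ^ m))
      = -2 * derivative (hermitePoly K m) := by
    rw [sum_range_succ', hermitePoly, derivative_sum, mul_sum]
    simp only [mul_zero, zero_smul, add_zero]
    refine sum_congr rfl fun j _ => ?_
    rw [show 2 * (j + 1) - 1 = 2 * j + 1 by omega, Function.iterate_succ_apply',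
      derivative_C_mul, nsmul_eq_mul, ← C_eq_natCast, ← mul_assoc, ← C_mul, mul_comm _ (_ : K),
      hcoeff, C_mul, C_neg, C_ofNat, mul_assoc]
  rw [hermitePoly, pow_succ]
  simp_rw [iterate_derivative_mul_X, mul_add, sum_add_distrib, hX, hD]
  ring

variable {K}

lemma iterate_derivative_hermitePoly_of_le {m k : ℕ} (h : m ≤ k) :
    derivative^[k] (hermitePoly K m) = derivative^[k] (X ^ m) := by
  rw [hermitePoly, iterate_derivative_sum, sum_eq_single 0]
  · simp
  · intro i _ hi
    rw [iterate_derivative_C_mul, ← Function.iterate_add_apply,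
      iterate_derivative_eq_zero (by rw [natDegree_X_pow]; omega), mul_zero]
  · simp

lemma iterate_derivative_hermitePoly_self (m : ℕ) :
    derivative^[m] (hermitePoly K m) = C (m ! : K) := by
  rw [iterate_derivative_hermitePoly_of_le le_rfl, iterate_derivative_X_pow_eq_C_mul,
    Nat.descFactorial_self, Nat.sub_self, pow_zero, mul_one]

lemma iterate_derivative_hermitePoly_of_lt {m k : ℕ} (h : m < k) :
    derivative^[k] (hermitePoly K m) = 0 := by
  rw [iterate_derivative_hermitePoly_of_le h.le,
    iterate_derivative_eq_zero (by rwa [natDegree_X_pow])]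

end Algebra

lemma eval_hermitePoly (m : ℕ) (ξ : ℝ) : (hermitePoly ℝ m).eval ξ = hermiteH m ξ := by
  simp_rw [hermitePoly, eval_finsetSum, eval_mul, eval_C, iterate_derivative_X_pow_eq_C_mul,
    eval_mul, eval_C, eval_pow, eval_X]
  rw [hermiteH, ← sum_subset (range_subset_range.2 (by omega : m / 2 + 1 ≤ m + 1))]
  · refine sum_congr rfl fun i hi => ?_
    have hi : 2 * i ≤ m := by rw [mem_range] at hi; omega
    rw [← Nat.factorial_mul_descFactorial hi]
    push_cast
    field_simp
  · intro i _ hi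
    rw [mem_range] at hi
    rw [Nat.descFactorial_eq_zero_iff_lt.2 (by omega)]
    simp

lemma hasDerivAt_weightRho (x : ℝ) : HasDerivAt weightRho (-(x / 2) * weightRho x) x := by
  have h := (((hasDerivAt_pow 2 x).fun_neg.div_const 4).exp).const_mul
    ((4 * Real.pi) ^ (-(1 : ℝ) / 2))
  refine h.congr_deriv ?_
  rw [weightRho]; push_cast; ring

lemma hasDerivAt_eval_mul_weightRho (q : ℝ[X]) (x : ℝ) :
    HasDerivAt (fun y => q.eval y * weightRho y)
      ((derivative q - C (1 / 2) * X * q).eval x * weightRho x) x := by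
  refine ((q.hasDerivAt x).mul (hasDerivAt_weightRho x)).congr_deriv ?_
  simp only [eval_sub, eval_mul, eval_C, eval_X]
  ring

lemma integrable_eval_mul_weightRho (p : ℝ[X]) :
    Integrable fun x => p.eval x * weightRho x := by
  induction p using Polynomial.induction_on' with
  | add p q hp hq => simpa [add_mul, Pi.add_def] using hp.add hq
  | monomial n a =>
    have h := (integrable_rpow_mul_exp_neg_mul_sq (b := 1 / 4) (by norm_num)
      (s := n) (by linarith [n.cast_nonneg (α := ℝ)])).const_mul
        (a * (4 * Real.pi) ^ (-(1 : ℝ) / 2))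
    convert h using 2 with x
    rw [eval_monomial, weightRho, Real.rpow_natCast]
    ring_nf

lemma integral_weightRho : ∫ x, weightRho x = 1 := by
  have h : ∫ x : ℝ, Real.exp (-x ^ 2 / 4) = √(4 * Real.pi) := by
    simpa [div_eq_inv_mul, neg_div, mul_comm] using integral_gaussian (1 / 4)
  simp only [weightRho]
  rw [integral_const_mul, h, Real.sqrt_eq_rpow, ← Real.rpow_add (by positivity)]
  norm_num

lemma integrable_eval_mul_eval_mul_weightRho (p q : ℝ[X]) :
    Integrable fun x => p.eval x * (q.eval x * weightRho x) := by
  simpa [mul_assoc] using integrable_eval_mul_weightRho (p * q)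

lemma integral_eval_mul_deriv_eval_mul_weightRho (p q : ℝ[X]) :
    ∫ x, p.eval x * ((derivative q - C (1 / 2) * X * q).eval x * weightRho x)
      = -∫ x, (derivative p).eval x * (q.eval x * weightRho x) :=
  integral_mul_deriv_eq_deriv_mul_of_integrable (fun x _ => p.hasDerivAt x)
    (fun x _ => hasDerivAt_eval_mul_weightRho q x)
    (integrable_eval_mul_eval_mul_weightRho _ _) (integrable_eval_mul_eval_mul_weightRho _ _)
    (integrable_eval_mul_eval_mul_weightRho _ _)

lemma integral_eval_mul_hermitePoly_mul_weightRho (p : ℝ[X]) (k : ℕ) :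
    ∫ x, p.eval x * ((hermitePoly ℝ k).eval x * weightRho x)
      = 2 ^ k * ∫ x, (derivative^[k] p).eval x * weightRho x := by
  induction k generalizing p with
  | zero => simp
  | succ k ih =>
    calc ∫ x, p.eval x * ((hermitePoly ℝ (k + 1)).eval x * weightRho x)
        = -2 * ∫ x, p.eval x * ((derivative (hermitePoly ℝ k)
            - C (1 / 2) * X * hermitePoly ℝ k).eval x * weightRho x) := by
          rw [← integral_const_mul, hermitePoly_succ]
          congr with x
          simp only [eval_sub, eval_mul, eval_C, eval_X, eval_ofNat]
          ring
      _ = 2 * ∫ x, (derivative p).eval x * ((hermitePoly ℝ k).eval x * weightRho x) := by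
          rw [integral_eval_mul_deriv_eval_mul_weightRho]
          ring
      _ = 2 ^ (k + 1) * ∫ x, (derivative^[k + 1] p).eval x * weightRho x := by
          rw [ih, Function.iterate_succ_apply]
          ring

theorem hermite_orthogonality (m n : ℕ) :
    ∫ ξ : ℝ, hermiteH m ξ * hermiteH n ξ * weightRho ξ
      = (2 : ℝ) ^ m * (Nat.factorial m : ℝ) * (if m = n then 1 else 0) := by
  wlog hmn : m ≤ n generalizing m n
  · rw [if_neg (by omega)]
    simpa [mul_comm (hermiteH m _), if_neg (show n ≠ m by omega)] using this n m (by omega)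
  simp_rw [← eval_hermitePoly, mul_assoc, integral_eval_mul_hermitePoly_mul_weightRho]
  rcases hmn.eq_or_lt with rfl | hlt
  · simp [iterate_derivative_hermitePoly_self, integral_const_mul, integral_weightRho]
  · simp [iterate_derivative_hermitePoly_of_lt hlt, hlt.ne]
end

section
/- Let γ : (-δ₁,δ₁)^{N-ℓ} → ℝ be a continuous function such that for every ξ̃ and every h̃ with |h̃| < h₀ and ξ̃, ξ̃+h̃ in the domain, γ is differentiable at ξ̃ and |γ(ξ̃+h̃) - γ(ξ̃) - h̃·∇γ(ξ̃)| ≤ C |h̃|^{3/2} |log|h̃||^{μ} for some constants C, μ > 0. Then γ is of class C^{1,β} for every β ∈ (0, 1/2); in particular ∇γ is Hölder continuous with exponent β: |∇γ(ξ̃₁) - ∇γ(ξ̃₂)| ≤ C_β |ξ̃₁ - ξ̃₂|^{β} on compact subsets. -/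
/-!
A logarithm costs less than any power: `s ^ (3/2) * |log s| ^ μ ≤ c * s ^ (1 + β)` for
`s ≤ 1` and `β < 1/2`, so the first-order Taylor remainder of `γ` is `O(‖h‖ ^ (1 + β))`.
If `x, y` are at distance `r`, comparing the expansions around `x` and `y` with steps
`y - x`, `v` and `y - x + v` isolates `⟪∇γ x - ∇γ y, v⟫`; taking `‖v‖ = r` in the direction of
`∇γ x - ∇γ y` gives `r * ‖∇γ x - ∇γ y‖ = O(r ^ (1 + β))`. This local Hölder bound is global
on a compact set, on which it also forces `∇γ` to be bounded (cover it by finitely many small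
balls).
-/

open Metric Real

namespace Real

theorem abs_log_rpow_le_mul_rpow_neg {α μ s : ℝ} (hα : 0 < α) (hμ : 0 < μ) (hs₀ : 0 ≤ s)
    (hs₁ : s ≤ 1) : |log s| ^ μ ≤ (α / μ) ^ (-μ) * s ^ (-α) := by
  rcases hs₀.eq_or_lt with rfl | hs
  · rw [log_zero, abs_zero, zero_rpow hμ.ne']
    positivity
  have hε : 0 < α / μ := div_pos hα hμ
  have hlog : |log s| ≤ s⁻¹ ^ (α / μ) / (α / μ) := by
    rw [abs_of_nonpos (log_nonpos hs₀ hs₁), ← log_inv]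
    exact log_le_rpow_div (inv_nonneg.2 hs₀) hε
  calc |log s| ^ μ ≤ (s⁻¹ ^ (α / μ) / (α / μ)) ^ μ := by gcongr
    _ = (α / μ) ^ (-μ) * s ^ (-α) := by
      rw [div_rpow (by positivity) hε.le, ← rpow_mul (by positivity), inv_rpow hs₀,
        ← rpow_neg hs₀, div_mul_cancel₀ _ hμ.ne', rpow_neg hε.le]
      ring

theorem rpow_mul_abs_log_rpow_le {a b μ s : ℝ} (hba : b < a) (hμ : 0 < μ) (hs₀ : 0 ≤ s)
    (hs₁ : s ≤ 1) : s ^ a * |log s| ^ μ ≤ ((a - b) / μ) ^ (-μ) * s ^ b := by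
  rcases hs₀.eq_or_lt with rfl | hs
  · rw [log_zero, abs_zero, zero_rpow hμ.ne', mul_zero]
    positivity
  calc s ^ a * |log s| ^ μ ≤ s ^ a * (((a - b) / μ) ^ (-μ) * s ^ (-(a - b))) := by
        gcongr; exact abs_log_rpow_le_mul_rpow_neg (sub_pos.2 hba) hμ hs₀ hs₁
    _ = ((a - b) / μ) ^ (-μ) * s ^ b := by
      rw [mul_left_comm, ← rpow_add hs]; ring_nf

end Real

theorem IsCompact.exists_norm_le_of_norm_sub_le {X F : Type*} [PseudoMetricSpace X]
    [SeminormedAddCommGroup F] {K : Set X} (hK : IsCompact K) {g : X → F} {ρ M : ℝ}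
    (hρ : 0 < ρ) (hg : ∀ x ∈ K, ∀ y ∈ K, dist x y < ρ → ‖g x - g y‖ ≤ M) :
    ∃ B, ∀ x ∈ K, ‖g x‖ ≤ B := by
  obtain ⟨t, htK, htfin, hcover⟩ := finite_cover_balls_of_compact hK hρ
  obtain ⟨B, hB⟩ := (htfin.image fun c => ‖g c‖).bddAbove
  refine ⟨B + M, fun x hx => ?_⟩
  obtain ⟨c, hct, hxc⟩ := Set.mem_iUnion₂.1 (hcover hx)
  calc ‖g x‖ ≤ ‖g c‖ + ‖g x - g c‖ := norm_le_norm_add_norm_sub' _ _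
    _ ≤ B + M := add_le_add (hB ⟨c, hct, rfl⟩) (hg x hx c (htK hct) hxc)

theorem IsCompact.exists_holder_of_local_holder {X F : Type*} [PseudoMetricSpace X]
    [SeminormedAddCommGroup F] {K : Set X} (hK : IsCompact K) {g : X → F} {ρ A β : ℝ}
    (hρ : 0 < ρ) (hA : 0 ≤ A) (hβ : 0 ≤ β)
    (hg : ∀ x ∈ K, ∀ y ∈ K, dist x y < ρ → ‖g x - g y‖ ≤ A * dist x y ^ β) :
    ∃ C > 0, ∀ x ∈ K, ∀ y ∈ K, ‖g x - g y‖ ≤ C * dist x y ^ β := by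
  obtain ⟨B, hB⟩ := hK.exists_norm_le_of_norm_sub_le (M := A * ρ ^ β) hρ
    fun x hx y hy hxy => (hg x hx y hy hxy).trans (by gcongr)
  refine ⟨max A (2 * B / ρ ^ β) + 1, by positivity, fun x hx y hy => ?_⟩
  have hC : max A (2 * B / ρ ^ β) ≤ max A (2 * B / ρ ^ β) + 1 := le_add_of_nonneg_right zero_le_one
  rcases lt_or_ge (dist x y) ρ with hxy | hxy
  · calc ‖g x - g y‖ ≤ A * dist x y ^ β := hg x hx y hy hxy
      _ ≤ _ := by gcongr; exact (le_max_left _ _).trans hC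
  · have hB₀ : 0 ≤ B := (norm_nonneg _).trans (hB x hx)
    calc ‖g x - g y‖ ≤ ‖g x‖ + ‖g y‖ := norm_sub_le _ _
      _ ≤ 2 * B / ρ ^ β * ρ ^ β := by
        rw [div_mul_cancel₀ _ (rpow_pos_of_pos hρ β).ne']; linarith [hB x hx, hB y hy]
      _ ≤ _ := by gcongr; exact (le_max_right _ _).trans hC

section TaylorRemainder

variable {E : Type*} [NormedAddCommGroup E] [InnerProductSpace ℝ E]

theorem mul_norm_le_of_forall_inner_le {w : E} {r M : ℝ} (hr : 0 ≤ r)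
    (h : ∀ v : E, ‖v‖ ≤ r → inner ℝ w v ≤ M) : r * ‖w‖ ≤ M := by
  rcases eq_or_ne w 0 with rfl | hw
  · simpa using h 0 (by simpa using hr)
  have hw' : 0 < ‖w‖ := norm_pos_iff.2 hw
  have hv : ‖(r / ‖w‖) • w‖ = r := by
    rw [norm_smul, norm_div, norm_norm, Real.norm_of_nonneg hr, div_mul_cancel₀ _ hw'.ne']
  have := h _ hv.le
  rwa [real_inner_smul_right, real_inner_self_eq_norm_mul_norm, div_mul_eq_mul_div,
    ← mul_assoc, mul_div_cancel_right₀ _ hw'.ne'] at this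

def taylorRemainder (f : E → ℝ) (g : E → E) (x h : E) : ℝ :=
  f (x + h) - f x - inner ℝ (g x) h

theorem inner_sub_eq_taylorRemainder (f : E → ℝ) (g : E → E) (x y v : E) :
    inner ℝ (g x - g y) v = taylorRemainder f g y v - taylorRemainder f g x (y - x + v)
      + taylorRemainder f g x (y - x) := by
  simp only [taylorRemainder, inner_add_right, inner_sub_left, ← add_assoc, add_sub_cancel]
  ring

theorem norm_sub_mul_norm_le_of_taylorRemainder_le {f : E → ℝ} {g : E → E} {x y : E} {b : ℝ}
    (hx : ∀ h, ‖h‖ ≤ 2 * ‖x - y‖ → |taylorRemainder f g x h| ≤ b)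
    (hy : ∀ h, ‖h‖ ≤ 2 * ‖x - y‖ → |taylorRemainder f g y h| ≤ b) :
    ‖x - y‖ * ‖g x - g y‖ ≤ 3 * b := by
  refine mul_norm_le_of_forall_inner_le (norm_nonneg _) fun v hv => ?_
  have hyx : ‖y - x‖ = ‖x - y‖ := norm_sub_rev _ _
  have h₁ := hy v (by linarith [norm_nonneg (x - y)])
  have h₂ := hx (y - x + v) (by linarith [norm_add_le (y - x) v])
  have h₃ := hx (y - x) (by linarith [norm_nonneg (x - y)])
  rw [inner_sub_eq_taylorRemainder f]
  linarith [le_abs_self (taylorRemainder f g y v),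
    neg_abs_le (taylorRemainder f g x (y - x + v)), le_abs_self (taylorRemainder f g x (y - x))]

theorem norm_sub_le_of_taylorRemainder_le_rpow {f : E → ℝ} {g : E → E} {x y : E} {A β : ℝ}
    (hA : 0 ≤ A) (hβ : 0 ≤ β)
    (hx : ∀ h, ‖h‖ ≤ 2 * ‖x - y‖ → |taylorRemainder f g x h| ≤ A * ‖h‖ ^ (1 + β))
    (hy : ∀ h, ‖h‖ ≤ 2 * ‖x - y‖ → |taylorRemainder f g y h| ≤ A * ‖h‖ ^ (1 + β)) :
    ‖g x - g y‖ ≤ 3 * 2 ^ (1 + β) * A * ‖x - y‖ ^ β := by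
  set r := ‖x - y‖
  rcases (norm_nonneg (x - y)).eq_or_lt with hr | hr
  · rw [eq_comm, norm_sub_eq_zero_iff] at hr
    simp only [hr, sub_self, norm_zero]
    positivity
  have hmono : ∀ h : E, ‖h‖ ≤ 2 * r → A * ‖h‖ ^ (1 + β) ≤ A * (2 * r) ^ (1 + β) :=
    fun h hh => by gcongr
  have key := norm_sub_mul_norm_le_of_taylorRemainder_le
    (fun h hh => (hx h hh).trans (hmono h hh)) (fun h hh => (hy h hh).trans (hmono h hh))
  rw [mul_rpow zero_le_two hr.le, rpow_add hr, rpow_one] at key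
  refine le_of_mul_le_mul_left ?_ hr
  linarith

theorem IsCompact.exists_holder_of_taylorRemainder_le {f : E → ℝ} {g : E → E} {K : Set E}
    (hK : IsCompact K) {ρ A β : ℝ} (hρ : 0 < ρ) (hA : 0 ≤ A) (hβ : 0 ≤ β)
    (hR : ∀ x ∈ K, ∀ h, ‖h‖ < ρ → |taylorRemainder f g x h| ≤ A * ‖h‖ ^ (1 + β)) :
    ∃ C > 0, ∀ x ∈ K, ∀ y ∈ K, ‖g x - g y‖ ≤ C * ‖x - y‖ ^ β := by
  have hlocal : ∀ x ∈ K, ∀ y ∈ K, dist x y < ρ / 2 →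
      ‖g x - g y‖ ≤ 3 * 2 ^ (1 + β) * A * dist x y ^ β := fun x hx y hy hxy => by
    rw [dist_eq_norm] at hxy ⊢
    have hsmall : ∀ h : E, ‖h‖ ≤ 2 * ‖x - y‖ → ‖h‖ < ρ := fun h hh => by linarith
    exact norm_sub_le_of_taylorRemainder_le_rpow hA hβ (fun h hh => hR x hx h (hsmall h hh))
      (fun h hh => hR y hy h (hsmall h hh))
  obtain ⟨C, hC, hCg⟩ :=
    hK.exists_holder_of_local_holder (half_pos hρ) (by positivity) hβ hlocal
  exact ⟨C, hC, fun x hx y hy => by simpa only [dist_eq_norm] using hCg x hx y hy⟩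

end TaylorRemainder

theorem taylor_bound_implies_holder_gradient_general (n : ℕ) (δ₁ h₀ C μ : ℝ)
    (hh₀ : 0 < h₀) (hC : 0 < C) (hμ : 0 < μ)
    (γ : EuclideanSpace ℝ (Fin n) → ℝ)
    (D : Set (EuclideanSpace ℝ (Fin n)))
    (hD : D = {ξ | ∀ i, |ξ i| < δ₁})
    (htaylor : ∀ ξ ∈ D, ∀ h : EuclideanSpace ℝ (Fin n), ξ + h ∈ D → ‖h‖ < h₀ →
      |γ (ξ + h) - γ ξ - (inner ℝ (gradient γ ξ) h : ℝ)|
        ≤ C * ‖h‖ ^ ((3 : ℝ) / 2) * |Real.log ‖h‖| ^ μ) :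
    ∀ β ∈ Set.Ioo (0 : ℝ) (1 / 2), ∀ K : Set (EuclideanSpace ℝ (Fin n)),
      IsCompact K → K ⊆ D →
      ∃ Cβ > 0, ∀ ξ₁ ∈ K, ∀ ξ₂ ∈ K,
        ‖gradient γ ξ₁ - gradient γ ξ₂‖ ≤ Cβ * ‖ξ₁ - ξ₂‖ ^ β := by
  rintro β ⟨hβ₀, hβ₁⟩ K hK hKD
  have hDopen : IsOpen D := by
    rw [hD, Set.ofPred_forall]
    exact isOpen_iInter_of_finite fun i => isOpen_lt (by fun_prop) continuous_const
  obtain ⟨δ, hδ, hδD⟩ := hK.exists_thickening_subset_open hDopen hKD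
  refine hK.exists_holder_of_taylorRemainder_le (f := γ) (ρ := min δ (min h₀ 1))
    (A := C * ((3 / 2 - (1 + β)) / μ) ^ (-μ)) (by positivity)
    (mul_nonneg hC.le (rpow_nonneg (div_nonneg (by linarith) hμ.le) _)) hβ₀.le
    fun ξ hξ h hh => ?_
  have hhδ : ‖h‖ < δ := hh.trans_le (min_le_left _ _)
  have hhh₀ : ‖h‖ < h₀ := hh.trans_le ((min_le_right _ _).trans (min_le_left _ _))
  have hh₁ : ‖h‖ ≤ 1 := hh.le.trans ((min_le_right _ _).trans (min_le_right _ _))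
  have hξh : ξ + h ∈ D :=
    hδD (mem_thickening_iff.2 ⟨ξ, hξ, by rwa [dist_eq_norm, add_sub_cancel_left]⟩)
  calc |taylorRemainder γ (gradient γ) ξ h|
      ≤ C * (‖h‖ ^ ((3 : ℝ) / 2) * |log ‖h‖| ^ μ) := by
        rw [← mul_assoc]; exact htaylor ξ (hKD hξ) h hξh hhh₀
    _ ≤ C * (((3 / 2 - (1 + β)) / μ) ^ (-μ) * ‖h‖ ^ (1 + β)) :=
        mul_le_mul_of_nonneg_left
          (rpow_mul_abs_log_rpow_le (by linarith) hμ (norm_nonneg h) hh₁) hC.le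
    _ = C * ((3 / 2 - (1 + β)) / μ) ^ (-μ) * ‖h‖ ^ (1 + β) := by ring

theorem taylor_bound_implies_holder_gradient (n : ℕ) (δ₁ h₀ C μ : ℝ)
    (hδ : 0 < δ₁) (hh₀ : 0 < h₀) (hC : 0 < C) (hμ : 0 < μ)
    (γ : EuclideanSpace ℝ (Fin n) → ℝ)
    (D : Set (EuclideanSpace ℝ (Fin n)))
    (hD : D = {ξ | ∀ i, |ξ i| < δ₁})
    (hcont : ContinuousOn γ D)
    (hdiff : ∀ ξ ∈ D, DifferentiableAt ℝ γ ξ)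
    (htaylor : ∀ ξ ∈ D, ∀ h : EuclideanSpace ℝ (Fin n), ξ + h ∈ D → ‖h‖ < h₀ →
      |γ (ξ + h) - γ ξ - (inner ℝ (gradient γ ξ) h : ℝ)|
        ≤ C * ‖h‖ ^ ((3 : ℝ) / 2) * |Real.log ‖h‖| ^ μ) :
    ∀ β ∈ Set.Ioo (0 : ℝ) (1 / 2), ∀ K : Set (EuclideanSpace ℝ (Fin n)),
      IsCompact K → K ⊆ D →
      ∃ Cβ > 0, ∀ ξ₁ ∈ K, ∀ ξ₂ ∈ K,
        ‖gradient γ ξ₁ - gradient γ ξ₂‖ ≤ Cβ * ‖ξ₁ - ξ₂‖ ^ β :=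
  taylor_bound_implies_holder_gradient_general n δ₁ h₀ C μ hh₀ hC hμ γ D hD htaylor
end
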